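/- arXiv:1409.4228 — 3 statements merged into one kernel-verified Lean document; each statement's English description precedes it below -/
import Mathlib

section
/- Let Φ : H → ℝ^n be a bounded linear map from a Hilbert space H, and suppose there exists a (k+1)-dimensional subspace Λ ⊆ H and a constant c > 0 such that ‖Φ f‖² ≥ c ‖f‖² for all f ∈ Λ. Then the self-adjoint operator Φ Φ* on ℝ^n has at least k+1 eigenvalues (counted with multiplicity) that are ≥ c; equivalently, the k-th smallest eigenvalue of 2I − Φ Φ* is at most 2 − c. -/
open Matrix BigOperators RealInnerProductSpace

/-- The `k`-th smallest eigenvalue of a self-adjoint operator on a Euclidean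
space, via the Courant--Fischer min-max principle. -/
noncomputable def kthEigOp {n : ℕ}
    (T : EuclideanSpace ℝ (Fin n) →L[ℝ] EuclideanSpace ℝ (Fin n)) (k : ℕ) : ℝ :=
  sInf {t : ℝ | ∃ Λ : Submodule ℝ (EuclideanSpace ℝ (Fin n)),
    Module.finrank ℝ Λ = k + 1 ∧
    t = sSup {r : ℝ | ∃ f ∈ Λ, f ≠ 0 ∧ r = ⟪f, T f⟫ / ⟪f, f⟫}}

/-!
The image `U = Φ(Λ)` is a `(k+1)`-dimensional subspace of `ℝⁿ` (`Φ` is injective on `Λ`), and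
on it the Rayleigh quotient of `ΦΦ*` is at least `c`: for `g = Φ f` with `f ∈ Λ`,
`‖g‖² = ⟪Φ* g, f⟫ ≤ ‖Φ* g‖ ‖f‖` and `c ‖f‖² ≤ ‖g‖²` give `c ‖g‖² ≤ ‖Φ* g‖² = ⟪g, ΦΦ* g⟫`.
Taking `U` in the min-max formula bounds the `k`-th eigenvalue of `2I - ΦΦ*` by `2 - c`; and every
subspace of dimension `n - k` meets `U` nontrivially, which bounds the `(n-1-k)`-th eigenvalue of
`ΦΦ*` from below by `c`.
-/

open Module

theorem Submodule.exists_finrank_eq {K V : Type*} [DivisionRing K] [AddCommGroup V] [Module K V]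
    [Module.Finite K V] {m : ℕ} (hm : m ≤ finrank K V) :
    ∃ W : Submodule K V, finrank K W = m := by
  let b := Module.finBasis K V
  refine ⟨Submodule.span K (Set.range (b ∘ Fin.castLE hm)), ?_⟩
  rw [finrank_span_eq_card (b.linearIndependent.comp _ (Fin.castLE_injective hm))]
  simp

theorem Submodule.exists_mem_inf_ne_zero_of_finrank_lt_add {K V : Type*} [DivisionRing K]
    [AddCommGroup V] [Module K V] [Module.Finite K V] (s t : Submodule K V)
    (h : finrank K V < finrank K s + finrank K t) : ∃ x ∈ s, x ∈ t ∧ x ≠ 0 := by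
  by_contra! hst
  exact h.not_ge (Submodule.finrank_add_finrank_le_of_disjoint (Submodule.disjoint_def.mpr hst))

section Rayleigh

variable {E : Type*} [NormedAddCommGroup E] [InnerProductSpace ℝ E]

theorem abs_inner_apply_div_inner_self_le_opNorm (T : E →L[ℝ] E) (f : E) :
    |⟪f, T f⟫ / ⟪f, f⟫| ≤ ‖T‖ := by
  rcases eq_or_ne f 0 with rfl | hf
  · simp
  have hpos : 0 < ⟪f, f⟫ := real_inner_self_pos.mpr hf
  rw [abs_div, abs_of_pos hpos, div_le_iff₀ hpos, real_inner_self_eq_norm_sq]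
  calc |⟪f, T f⟫| ≤ ‖f‖ * ‖T f‖ := abs_real_inner_le_norm f (T f)
    _ ≤ ‖f‖ * (‖T‖ * ‖f‖) := by gcongr; exact T.le_opNorm f
    _ = ‖T‖ * ‖f‖ ^ 2 := by ring

theorem inner_smul_id_sub_apply_div_inner_self (a : ℝ) (T : E →L[ℝ] E) {f : E} (hf : f ≠ 0) :
    ⟪f, (a • ContinuousLinearMap.id ℝ E - T) f⟫ / ⟪f, f⟫ = a - ⟪f, T f⟫ / ⟪f, f⟫ := by
  have hpos : 0 < ⟪f, f⟫ := real_inner_self_pos.mpr hf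
  simp only [_root_.sub_apply, _root_.smul_apply, ContinuousLinearMap.id_apply,
    inner_sub_right, real_inner_smul_right]
  field_simp

end Rayleigh

section MinMax

variable {n k : ℕ} {T : EuclideanSpace ℝ (Fin n) →L[ℝ] EuclideanSpace ℝ (Fin n)} {c : ℝ}

theorem le_kthEigOp (hk : k + 1 ≤ n)
    (h : ∀ W : Submodule ℝ (EuclideanSpace ℝ (Fin n)), finrank ℝ W = k + 1 →
      ∃ f ∈ W, f ≠ 0 ∧ c ≤ ⟪f, T f⟫ / ⟪f, f⟫) :
    c ≤ kthEigOp T k := by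
  obtain ⟨W₀, hW₀⟩ := Submodule.exists_finrank_eq (K := ℝ)
    (hk.trans_eq finrank_euclideanSpace_fin.symm)
  refine le_csInf ⟨_, W₀, hW₀, rfl⟩ ?_
  rintro t ⟨W, hW, rfl⟩
  obtain ⟨f, hfW, hf0, hcf⟩ := h W hW
  refine le_csSup_of_le ⟨‖T‖, ?_⟩ ⟨f, hfW, hf0, rfl⟩ hcf
  rintro r ⟨g, -, -, rfl⟩
  exact (abs_le.mp (abs_inner_apply_div_inner_self_le_opNorm T g)).2

theorem kthEigOp_le (W : Submodule ℝ (EuclideanSpace ℝ (Fin n))) (hW : finrank ℝ W = k + 1)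
    (h : ∀ f ∈ W, f ≠ 0 → ⟪f, T f⟫ / ⟪f, f⟫ ≤ c) :
    kthEigOp T k ≤ c := by
  have hne : ∀ V : Submodule ℝ (EuclideanSpace ℝ (Fin n)), finrank ℝ V = k + 1 →
      ∃ f ∈ V, f ≠ 0 := fun V hV =>
    Submodule.exists_mem_ne_zero_of_ne_bot fun hbot => by rw [hbot, finrank_bot] at hV; omega
  have hbdd : BddBelow {t : ℝ | ∃ V : Submodule ℝ (EuclideanSpace ℝ (Fin n)),
      finrank ℝ V = k + 1 ∧ t = sSup {r : ℝ | ∃ f ∈ V, f ≠ 0 ∧ r = ⟪f, T f⟫ / ⟪f, f⟫}} := by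
    refine ⟨-‖T‖, ?_⟩
    rintro t ⟨V, hV, rfl⟩
    obtain ⟨f, hfV, hf0⟩ := hne V hV
    have hbound := fun g => abs_le.mp (abs_inner_apply_div_inner_self_le_opNorm T g)
    refine (hbound f).1.trans (le_csSup ⟨‖T‖, ?_⟩ ⟨f, hfV, hf0, rfl⟩)
    rintro r ⟨g, -, -, rfl⟩
    exact (hbound g).2
  obtain ⟨f₀, hf₀W, hf₀⟩ := hne W hW
  refine csInf_le_of_le hbdd ⟨W, hW, rfl⟩ (csSup_le ⟨_, f₀, hf₀W, hf₀, rfl⟩ ?_)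
  rintro r ⟨f, hfW, hf0, rfl⟩
  exact h f hfW hf0

end MinMax

section LowerBound

variable {H F : Type*}

theorem injective_domRestrict_of_mul_norm_sq_le [NormedAddCommGroup H] [NormedSpace ℝ H]
    [NormedAddCommGroup F] [NormedSpace ℝ F] {c : ℝ} (hc : 0 < c) (Φ : H →L[ℝ] F)
    {Λ : Submodule ℝ H} (hlow : ∀ f ∈ Λ, c * ‖f‖ ^ 2 ≤ ‖Φ f‖ ^ 2) :
    Function.Injective ((Φ : H →ₗ[ℝ] F).domRestrict Λ) := by
  refine (injective_iff_map_eq_zero _).mpr fun f hf => ?_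
  have hΦf : Φ f = 0 := hf
  have := hlow f f.2
  rw [hΦf, norm_zero, zero_pow two_ne_zero] at this
  have : ‖(f : H)‖ ^ 2 ≤ 0 := nonpos_of_mul_nonpos_right this hc
  exact Subtype.ext (norm_eq_zero.mp (pow_eq_zero_iff two_ne_zero |>.mp
    (le_antisymm this (sq_nonneg _))))

theorem finrank_map_of_mul_norm_sq_le [NormedAddCommGroup H] [NormedSpace ℝ H]
    [NormedAddCommGroup F] [NormedSpace ℝ F] {c : ℝ} (hc : 0 < c) (Φ : H →L[ℝ] F)
    {Λ : Submodule ℝ H} (hlow : ∀ f ∈ Λ, c * ‖f‖ ^ 2 ≤ ‖Φ f‖ ^ 2) :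
    finrank ℝ (Λ.map (Φ : H →ₗ[ℝ] F)) = finrank ℝ Λ := by
  rw [← LinearMap.range_domRestrict,
    LinearMap.finrank_range_of_inj (injective_domRestrict_of_mul_norm_sq_le hc Φ hlow)]

variable [NormedAddCommGroup H] [InnerProductSpace ℝ H] [CompleteSpace H]
  [NormedAddCommGroup F] [InnerProductSpace ℝ F] [CompleteSpace F]

theorem real_inner_comp_adjoint_apply_self (Φ : H →L[ℝ] F) (g : F) :
    ⟪g, (Φ ∘L ContinuousLinearMap.adjoint Φ) g⟫ = ‖ContinuousLinearMap.adjoint Φ g‖ ^ 2 := by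
  simpa using ((ContinuousLinearMap.adjoint Φ).apply_norm_sq_eq_inner_adjoint_right g).symm

theorem mul_norm_sq_le_norm_adjoint_apply_sq {c : ℝ} (hc : 0 ≤ c) (Φ : H →L[ℝ] F) {f : H}
    (hf : c * ‖f‖ ^ 2 ≤ ‖Φ f‖ ^ 2) :
    c * ‖Φ f‖ ^ 2 ≤ ‖ContinuousLinearMap.adjoint Φ (Φ f)‖ ^ 2 := by
  set a := ‖ContinuousLinearMap.adjoint Φ (Φ f)‖
  have hcs : ‖Φ f‖ ^ 2 ≤ a * ‖f‖ := by
    rw [← real_inner_self_eq_norm_sq, ← ContinuousLinearMap.adjoint_inner_left]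
    exact real_inner_le_norm _ _
  rcases (sq_nonneg ‖Φ f‖).eq_or_lt with h0 | hpos
  · rw [← h0, mul_zero]; positivity
  refine le_of_mul_le_mul_right ?_ hpos
  calc c * ‖Φ f‖ ^ 2 * ‖Φ f‖ ^ 2 ≤ c * (a * ‖f‖) ^ 2 := by
        rw [mul_assoc, ← sq]; gcongr
    _ = a ^ 2 * (c * ‖f‖ ^ 2) := by ring
    _ ≤ a ^ 2 * ‖Φ f‖ ^ 2 := by gcongr

theorem le_inner_comp_adjoint_apply_div_of_mem_map {c : ℝ} (hc : 0 ≤ c) (Φ : H →L[ℝ] F)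
    {Λ : Submodule ℝ H} (hlow : ∀ f ∈ Λ, c * ‖f‖ ^ 2 ≤ ‖Φ f‖ ^ 2) {g : F}
    (hg : g ∈ Λ.map (Φ : H →ₗ[ℝ] F)) (hg0 : g ≠ 0) :
    c ≤ ⟪g, (Φ ∘L ContinuousLinearMap.adjoint Φ) g⟫ / ⟪g, g⟫ := by
  obtain ⟨f, hf, rfl⟩ := Submodule.mem_map.mp hg
  rw [le_div_iff₀ (real_inner_self_pos.mpr hg0), real_inner_comp_adjoint_apply_self,
    real_inner_self_eq_norm_sq]
  exact mul_norm_sq_le_norm_adjoint_apply_sq hc Φ (hlow f hf)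

end LowerBound

/-- if `Φ : H → ℝⁿ` is a bounded linear map from a Hilbert space
and there is a `(k+1)`-dimensional subspace `Λ ⊆ H` with `‖Φ f‖² ≥ c ‖f‖²` on
`Λ` for some `c > 0`, then `ΦΦ*` has at least `k+1` eigenvalues `≥ c`
(i.e. the `(n-1-k)`-th smallest eigenvalue of `ΦΦ*` is `≥ c`); equivalently
the `k`-th smallest eigenvalue of `2I - ΦΦ*` is at most `2 - c`. -/
theorem stmt2 {H : Type*} [NormedAddCommGroup H] [InnerProductSpace ℝ H]
    [CompleteSpace H] {n k : ℕ} (c : ℝ) (hc : 0 < c)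
    (Φ : H →L[ℝ] EuclideanSpace ℝ (Fin n))
    (Λ : Submodule ℝ H) (hdim : Module.finrank ℝ Λ = k + 1)
    (hlow : ∀ f ∈ Λ, c * ‖f‖ ^ 2 ≤ ‖Φ f‖ ^ 2) :
    c ≤ kthEigOp (Φ ∘L ContinuousLinearMap.adjoint Φ) (n - 1 - k) ∧
      kthEigOp ((2 : ℝ) • ContinuousLinearMap.id ℝ (EuclideanSpace ℝ (Fin n)) -
        Φ ∘L ContinuousLinearMap.adjoint Φ) k ≤ 2 - c := by
  set U := Λ.map (Φ : H →ₗ[ℝ] EuclideanSpace ℝ (Fin n))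
  have hU : finrank ℝ U = k + 1 := (finrank_map_of_mul_norm_sq_le hc Φ hlow).trans hdim
  have hkn : k + 1 ≤ n := by
    simpa [hU] using Submodule.finrank_le U
  have hray {g} := le_inner_comp_adjoint_apply_div_of_mem_map hc.le Φ hlow (g := g)
  constructor
  · refine le_kthEigOp (by omega) fun W hW => ?_
    obtain ⟨g, hgU, hgW, hg0⟩ := Submodule.exists_mem_inf_ne_zero_of_finrank_lt_add U W
      (by rw [hU, hW, finrank_euclideanSpace_fin]; omega)
    exact ⟨g, hgW, hg0, hray hgU hg0⟩
  · refine kthEigOp_le U hU fun g hgU hg0 => ?_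
    rw [inner_smul_id_sub_apply_div_inner_self 2 _ hg0]
    linarith [hray hgU hg0]
end

section
/- Let (M, μ) be a finite measure space and (U_v)_{v ∈ V} a finite family of measurable sets of positive measure such that μ-almost every point of M lies in exactly two of the sets U_v. Define Φ : L²(M, μ) → ℝ^V by Φ(f)(v) = μ(U_v)^{−1/2} ∫_{U_v} f dμ. Then the matrix 2I − Φ Φ* equals the normalized Laplacian of the weighted graph on vertex set V with edge weights ω({u,v}) = μ(U_u ∩ U_v). -/
open MeasureTheory BigOperators

/-! The `(u, v)` entry of `ΦΦ*` is `μ(U_u ∩ U_v) / √(μ(U_u) μ(U_v))`, since `φ_u φ_v` is a constant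
multiple of the indicator of `U_u ∩ U_v`. Summing `μ(U_v ∩ U_u)` over all `u` integrates over `U_v`
the number of sets containing a point, which is `2` almost everywhere; discarding the term `u = v`
leaves the weighted degree `d_v^ω = μ(U_v)`. Hence `S^{-1/2} W S^{-1/2}` is the off-diagonal part of
`ΦΦ*`, whose diagonal is `I`, and `2I - ΦΦ* = I - S^{-1/2} W S^{-1/2}`. -/

variable {M : Type*} [MeasurableSpace M] {V : Type*} [Fintype V] [DecidableEq V]

/-- `φ_v = μ(U_v)^{-1/2} 𝟙_{U_v}`. -/
noncomputable def phiFn (μ : Measure M) (U : V → Set M) (v : V) : M → ℝ :=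
  Set.indicator (U v) (fun _ => 1 / Real.sqrt ((μ (U v)).toReal))

/-- The matrix of `ΦΦ*`, whose `(u,v)` entry is `∫ φ_u φ_v dμ`. -/
noncomputable def PhiPhiStar (μ : Measure M) (U : V → Set M) : Matrix V V ℝ :=
  fun u v => ∫ x, phiFn μ U u x * phiFn μ U v x ∂μ

/-- The weighted adjacency matrix `W({u,v}) = μ(U_u ∩ U_v)` (zero diagonal). -/
noncomputable def Wcov (μ : Measure M) (U : V → Set M) : Matrix V V ℝ :=
  fun u v => if u = v then 0 else (μ (U u ∩ U v)).toReal

/-- The weighted degree `d_v^ω = ∑_{u ∼ v} μ(U_u ∩ U_v)`. -/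
noncomputable def dcov (μ : Measure M) (U : V → Set M) (v : V) : ℝ :=
  ∑ u, Wcov μ U v u

/-- The normalized Laplacian `L = I - S^{-1/2} W S^{-1/2}` of the cover graph. -/
noncomputable def normLapCov (μ : Measure M) (U : V → Set M) : Matrix V V ℝ :=
  fun u v => (if u = v then 1 else 0) -
    Wcov μ U u v / Real.sqrt (dcov μ U u * dcov μ U v)

lemma sum_indicator_one_eq_ncard {ι α R : Type*} [Fintype ι] [AddCommMonoidWithOne R]
    (U : ι → Set α) (x : α) :
    ∑ i, (U i).indicator (1 : α → R) x = {i | x ∈ U i}.ncard := by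
  classical
  simp only [Set.indicator_apply, Pi.one_apply, Finset.sum_boole, Set.ncard_eq_toFinset_card',
    Set.toFinset_ofPred]

lemma sum_measure_inter_eq_of_ae_ncard_eq {α ι : Type*} [MeasurableSpace α] [Fintype ι]
    (μ : Measure α) {U : ι → Set α} (hU : ∀ i, MeasurableSet (U i)) {n : ℕ}
    (hn : ∀ᵐ x ∂μ, {i | x ∈ U i}.ncard = n) (s : Set α) :
    ∑ i, μ (s ∩ U i) = n * μ s := by
  calc ∑ i, μ (s ∩ U i) = ∑ i, ∫⁻ x in s, (U i).indicator 1 x ∂μ := by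
        simp only [lintegral_indicator_one (hU _), Measure.restrict_apply (hU _), Set.inter_comm]
    _ = ∫⁻ x in s, ∑ i, (U i).indicator 1 x ∂μ :=
        (lintegral_finsetSum _ fun i _ => measurable_one.indicator (hU i)).symm
    _ = ∫⁻ _ in s, (n : ENNReal) ∂μ := by
        refine lintegral_congr_ae (ae_restrict_of_ae ?_)
        filter_upwards [hn] with x hx
        rw [sum_indicator_one_eq_ncard, hx]
    _ = n * μ s := by rw [lintegral_const, Measure.restrict_apply_univ]

lemma dcov_eq_of_ae_ncard_eq (μ : Measure M) [IsFiniteMeasure μ] {U : V → Set M}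
    (hU : ∀ v, MeasurableSet (U v)) {n : ℕ} (hn : ∀ᵐ x ∂μ, {v | x ∈ U v}.ncard = n) (v : V) :
    dcov μ U v = (n - 1) * μ.real (U v) := by
  have hsum : ∑ u, μ.real (U v ∩ U u) = n * μ.real (U v) := by
    simp only [measureReal_def, ← ENNReal.toReal_sum (fun _ _ => measure_ne_top μ _),
      sum_measure_inter_eq_of_ae_ncard_eq μ hU hn, ENNReal.toReal_mul, ENNReal.toReal_natCast]
  have hW : ∀ u, Wcov μ U v u = μ.real (U v ∩ U u) - if v = u then μ.real (U v) else 0 := by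
    intro u
    unfold Wcov
    split_ifs with h
    · rw [h, Set.inter_self, sub_self]
    · rw [measureReal_def, sub_zero]
  simp only [dcov, hW, Finset.sum_sub_distrib, Finset.sum_ite_eq, Finset.mem_univ, if_true, hsum]
  ring

lemma phiPhiStar_apply {ι : Type*} (μ : Measure M) {U : ι → Set M}
    (hU : ∀ i, MeasurableSet (U i)) (i j : ι) :
    PhiPhiStar μ U i j = μ.real (U i ∩ U j) / Real.sqrt (μ.real (U i) * μ.real (U j)) := by
  rw [Real.sqrt_mul measureReal_nonneg]
  simp only [PhiPhiStar, phiFn, ← Set.inter_indicator_mul,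
    integral_indicator_const _ ((hU i).inter (hU j)), smul_eq_mul, measureReal_def]
  ring

/-- for a finite measure space `(M, μ)` and a finite family of
measurable sets of positive measure covering `μ`-a.e. point exactly twice,
the matrix `2I - ΦΦ*` (with `Φ f (v) = μ(U_v)^{-1/2} ∫_{U_v} f dμ`) equals
the normalized Laplacian of the associated weighted graph. -/
theorem stmt3 (μ : Measure M) [IsFiniteMeasure μ] (U : V → Set M)
    (hmeas : ∀ v, MeasurableSet (U v))
    (hpos : ∀ v, 0 < μ (U v))
    (h2 : ∀ᵐ x ∂μ, {v | x ∈ U v}.ncard = 2) :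
    ∀ u v, 2 * (if u = v then (1 : ℝ) else 0) - PhiPhiStar μ U u v =
      normLapCov μ U u v := by
  intro u v
  have hdeg : ∀ w, dcov μ U w = μ.real (U w) := fun w => by
    rw [dcov_eq_of_ae_ncard_eq μ hmeas h2]; norm_num
  rw [normLapCov, hdeg, hdeg, phiPhiStar_apply μ hmeas, Wcov]
  split_ifs with huv
  · subst huv
    have hreal : μ.real (U u) ≠ 0 :=
      (measureReal_ne_zero_iff (measure_ne_top μ _)).2 (hpos u).ne'
    rw [Set.inter_self, Real.sqrt_mul_self measureReal_nonneg, div_self hreal]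
    norm_num
  · rw [measureReal_def]
    ring
end

section
/- The first nonzero eigenvalue (Fiedler value) of the normalized Laplacian of the once-subdivided star graph S_d^1 (obtained from the star K_{1,d} by inserting one new vertex in the middle of each edge) is bounded below by a positive constant independent of d. -/
open Matrix BigOperators

/-- The `k`-th smallest eigenvalue of a symmetric matrix via min-max. -/
noncomputable def kthEig {W : Type*} [Fintype W] (A : Matrix W W ℝ) (k : ℕ) : ℝ :=
  sInf {t : ℝ | ∃ Λ : Submodule ℝ (W → ℝ), Module.finrank ℝ Λ = k + 1 ∧
    t = sSup {r : ℝ | ∃ f ∈ Λ, f ≠ 0 ∧ r = (f ⬝ᵥ A.mulVec f) / (f ⬝ᵥ f)}}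

/-- The once-subdivided star graph `S_d^1`: a center `c`, middle vertices
`m_1, …, m_d` and leaves `l_1, …, l_d`, with edges `{c, m_i}` and
`{m_i, l_i}`. -/
def subStar (d : ℕ) : SimpleGraph (Unit ⊕ Fin d ⊕ Fin d) where
  Adj x y :=
    (∃ i, x = Sum.inl () ∧ y = Sum.inr (Sum.inl i)) ∨
    (∃ i, y = Sum.inl () ∧ x = Sum.inr (Sum.inl i)) ∨
    (∃ i, x = Sum.inr (Sum.inl i) ∧ y = Sum.inr (Sum.inr i)) ∨
    (∃ i, y = Sum.inr (Sum.inl i) ∧ x = Sum.inr (Sum.inr i))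
  symm := by
    constructor
    intro x y h
    rcases h with ⟨i, h1, h2⟩ | ⟨i, h1, h2⟩ | ⟨i, h1, h2⟩ | ⟨i, h1, h2⟩
    · exact Or.inr (Or.inl ⟨i, h1, h2⟩)
    · exact Or.inl ⟨i, h1, h2⟩
    · exact Or.inr (Or.inr (Or.inr ⟨i, h1, h2⟩))
    · exact Or.inr (Or.inr (Or.inl ⟨i, h1, h2⟩))
  loopless := by
    constructor
    intro x h
    rcases h with ⟨i, h1, h2⟩ | ⟨i, h1, h2⟩ | ⟨i, h1, h2⟩ | ⟨i, h1, h2⟩ <;>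
      subst h1 <;> simp_all

instance (d : ℕ) : DecidableRel (subStar d).Adj := fun x y => by
  dsimp [subStar]; infer_instance

/-- The normalized Laplacian of a simple graph. -/
noncomputable def normLap {V : Type*} [Fintype V] [DecidableEq V]
    (G : SimpleGraph V) [DecidableRel G.Adj] : Matrix V V ℝ :=
  fun u v => (if u = v then 1 else 0) -
    (if G.Adj u v then 1 else 0) /
      (Real.sqrt (G.degree u) * Real.sqrt (G.degree v))
/-! Every `2`-dimensional subspace contains a nonzero `f` orthogonal to `√deg`, so it suffices
to bound the Rayleigh quotient of such `f`. Writing `f = √deg · g`, orthogonality says that the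
degree-weighted sum of `g` vanishes, and `f ⬝ᵥ L f = ½ ∑_{u ~ v} (g u - g v)²`. On `S_d^1` all
sums split over the branches `c – m_i – l_i`; on a branch with values `x, y, z`, adding
`(2 - √2) x (x + 2y + z)` turns `(x - y)² + (y - z)² - (1 - 1/√2)(x² + 2y² + z²)` into a sum of
squares, and these added terms sum to `(2 - √2) x` times the vanishing weighted sum. The constant
`1 - 1/√2` is the exact Fiedler value once `d ≥ 2`. -/

open Finset

section MinMax

variable {W : Type*} [Fintype W]

theorem dotProduct_mulVec_le (A : Matrix W W ℝ) (f : W → ℝ) :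
    f ⬝ᵥ A *ᵥ f ≤ (∑ i, ∑ j, |A i j|) * (f ⬝ᵥ f) := by
  have hsq (i : W) : f i ^ 2 ≤ f ⬝ᵥ f := by
    simpa only [dotProduct, sq] using
      single_le_sum (f := fun j => f j * f j) (fun j _ => mul_self_nonneg (f j)) (mem_univ i)
  have hprod (i j : W) : |f i * f j| ≤ f ⬝ᵥ f := by
    rw [abs_mul]
    nlinarith [hsq i, hsq j, sq_abs (f i), sq_abs (f j), sq_nonneg (|f i| - |f j|)]
  calc f ⬝ᵥ A *ᵥ f = ∑ i, ∑ j, A i j * (f i * f j) := by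
        simp only [dotProduct, mulVec, mul_sum]; congr! 2; ring
    _ ≤ ∑ i, ∑ j, |A i j| * (f ⬝ᵥ f) := by
        refine sum_le_sum fun i _ => sum_le_sum fun j _ => ?_
        calc A i j * (f i * f j) ≤ |A i j| * |f i * f j| := abs_mul (A i j) _ ▸ le_abs_self _
          _ ≤ |A i j| * (f ⬝ᵥ f) := by gcongr; exact hprod i j
    _ = (∑ i, ∑ j, |A i j|) * (f ⬝ᵥ f) := by simp only [sum_mul]

theorem exists_mem_ne_zero_dotProduct_eq_zero {Λ : Submodule ℝ (W → ℝ)}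
    (hΛ : 1 < Module.finrank ℝ Λ) (w : W → ℝ) : ∃ f ∈ Λ, f ≠ 0 ∧ f ⬝ᵥ w = 0 := by
  let φ : Λ →ₗ[ℝ] ℝ := (dotProductBilin ℝ ℝ).flip w ∘ₗ Λ.subtype
  have hker : LinearMap.ker φ ≠ ⊥ :=
    LinearMap.ker_ne_bot_of_finrank_lt (by rwa [Module.finrank_self])
  obtain ⟨f, hf, hf0⟩ := (Submodule.ne_bot_iff _).1 hker
  exact ⟨f, f.2, by simpa using hf0, hf⟩

theorem dotProduct_self_pos {f : W → ℝ} (hf : f ≠ 0) : 0 < f ⬝ᵥ f := by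
  obtain ⟨u, hu⟩ := Function.ne_iff.1 hf
  exact sum_pos' (fun v _ => mul_self_nonneg (f v)) ⟨u, mem_univ u, mul_self_pos.2 hu⟩

theorem le_kthEig_one (A : Matrix W W ℝ) (hW : 2 ≤ Fintype.card W) (w : W → ℝ) {c : ℝ}
    (h : ∀ f, f ⬝ᵥ w = 0 → c * (f ⬝ᵥ f) ≤ f ⬝ᵥ A *ᵥ f) : c ≤ kthEig A 1 := by
  apply le_csInf
  · obtain ⟨v, hv⟩ := exists_linearIndependent_of_le_finrank
      (hW.trans_eq (Module.finrank_fintype_fun_eq_card ℝ).symm)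
    exact ⟨_, Submodule.span ℝ (Set.range v), by rw [finrank_span_eq_card hv, Fintype.card_fin],
      rfl⟩
  rintro t ⟨Λ, hΛ, rfl⟩
  obtain ⟨f, hfΛ, hf0, hfw⟩ := exists_mem_ne_zero_dotProduct_eq_zero (hΛ.trans_gt one_lt_two) w
  have hbdd : BddAbove {r | ∃ f ∈ Λ, f ≠ 0 ∧ r = (f ⬝ᵥ A *ᵥ f) / (f ⬝ᵥ f)} := by
    refine ⟨∑ i, ∑ j, |A i j|, ?_⟩
    rintro r ⟨g, -, hg0, rfl⟩
    exact (div_le_iff₀ (dotProduct_self_pos hg0)).2 (dotProduct_mulVec_le A g)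
  exact ((le_div_iff₀ (dotProduct_self_pos hf0)).2 (h f hfw)).trans
    (le_csSup hbdd ⟨f, hfΛ, hf0, rfl⟩)

end MinMax

section NormLap

variable {V : Type*} [Fintype V] [DecidableEq V] (G : SimpleGraph V) [DecidableRel G.Adj]

theorem diagonal_sqrt_degree_mul_normLap_mul_diagonal :
    diagonal (fun v => √(G.degree v)) * normLap G * diagonal (fun v => √(G.degree v)) =
      G.lapMatrix ℝ := by
  ext u v
  simp only [mul_diagonal, diagonal_mul, normLap, SimpleGraph.lapMatrix, SimpleGraph.degMatrix,
    Matrix.sub_apply, diagonal_apply, SimpleGraph.adjMatrix_apply]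
  by_cases huv : u = v
  · subst huv
    simp [Real.mul_self_sqrt (Nat.cast_nonneg _)]
  by_cases hadj : G.Adj u v
  · have hu : √(G.degree u) ≠ 0 :=
      (Real.sqrt_pos.2 (Nat.cast_pos.2 ((G.degree_pos_iff_exists_adj u).2 ⟨v, hadj⟩))).ne'
    have hv : √(G.degree v) ≠ 0 :=
      (Real.sqrt_pos.2 (Nat.cast_pos.2 ((G.degree_pos_iff_exists_adj v).2 ⟨u, hadj.symm⟩))).ne'
    simp only [huv, hadj, if_true, if_false]
    field_simp
    ring
  · simp [huv, hadj]

theorem dotProduct_normLap_mulVec_sqrt_degree_mul (g : V → ℝ) :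
    (fun v => √(G.degree v) * g v) ⬝ᵥ normLap G *ᵥ (fun v => √(G.degree v) * g v) =
      (∑ u, ∑ v, if G.Adj u v then (g u - g v) ^ 2 else 0) / 2 := by
  have hleft : g ᵥ* diagonal (fun v => √(G.degree v)) = fun v => √(G.degree v) * g v :=
    funext fun v => (vecMul_diagonal _ _ v).trans (mul_comm _ _)
  have hright : diagonal (fun v => √(G.degree v)) *ᵥ g = fun v => √(G.degree v) * g v :=
    funext fun v => mulVec_diagonal _ _ v
  rw [← G.lapMatrix_toLinearMap₂' ℝ, toLinearMap₂'_apply',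
    ← diagonal_sqrt_degree_mul_normLap_mul_diagonal, ← mulVec_mulVec, ← mulVec_mulVec, hright,
    dotProduct_mulVec g, hleft]

theorem le_dotProduct_normLap_mulVec_of_forall (hG : ∀ v, G.degree v ≠ 0) {c : ℝ}
    (h : ∀ g : V → ℝ, ∑ v, (G.degree v : ℝ) * g v = 0 →
      c * ∑ v, (G.degree v : ℝ) * g v ^ 2 ≤
        (∑ u, ∑ v, if G.Adj u v then (g u - g v) ^ 2 else 0) / 2)
    (f : V → ℝ) (hf : f ⬝ᵥ (fun v => √(G.degree v)) = 0) :
    c * (f ⬝ᵥ f) ≤ f ⬝ᵥ normLap G *ᵥ f := by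
  have hsq (v : V) : √(G.degree v) * √(G.degree v) = G.degree v :=
    Real.mul_self_sqrt (Nat.cast_nonneg _)
  have hpos (v : V) : √(G.degree v) ≠ 0 := by positivity [hG v]
  set g : V → ℝ := fun v => f v / √(G.degree v)
  have hfg : f = fun v => √(G.degree v) * g v := funext fun v => (mul_div_cancel₀ _ (hpos v)).symm
  rw [hfg] at hf ⊢
  rw [dotProduct_normLap_mulVec_sqrt_degree_mul]
  refine le_of_eq_of_le ?_ (h g ?_)
  · exact congrArg (c * ·) (sum_congr rfl fun v _ => by linear_combination g v ^ 2 * hsq v)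
  · exact hf ▸ sum_congr rfl fun v _ => by linear_combination -g v * hsq v

end NormLap

/-- The multiplier `2 - √2` is the one making `(0, 1, √2)`, a branch of a Fiedler vector of
`subStar d`, a null vector of the difference of the two sides. -/
theorem one_sub_sqrt_two_div_two_mul_le (x y z : ℝ) :
    (1 - √2 / 2) * (x ^ 2 + 2 * y ^ 2 + z ^ 2) ≤
      (x - y) ^ 2 + (y - z) ^ 2 + (2 - √2) * x * (x + 2 * y + z) := by
  have hs : √2 ^ 2 = 2 := Real.sq_sqrt zero_le_two
  have hs2 : √2 ≤ 2 := by nlinarith [Real.sqrt_nonneg 2]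
  have hsos : (x - y) ^ 2 + (y - z) ^ 2 + (2 - √2) * x * (x + 2 * y + z) -
      (1 - √2 / 2) * (x ^ 2 + 2 * y ^ 2 + z ^ 2) =
        √2 / 2 * (√2 * y - z + (1 - √2) * x) ^ 2 + (4 - 2 * √2) * x ^ 2 := by
    linear_combination ((1 - √2 / 2) * x ^ 2 + (√2 - 1) * x * y - x * z - √2 / 2 * y ^ 2 +
      y * z) * hs
  have : 0 ≤ √2 / 2 * (√2 * y - z + (1 - √2) * x) ^ 2 + (4 - 2 * √2) * x ^ 2 :=
    add_nonneg (by positivity) (mul_nonneg (by linarith) (sq_nonneg x))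
  linarith

section SubStar

variable {d : ℕ}

theorem subStar_degree_inl : (subStar d).degree (Sum.inl ()) = d := by
  rw [← SimpleGraph.card_neighborFinset_eq_degree,
    show (subStar d).neighborFinset (Sum.inl ()) = univ.map (.trans .inl .inr) by
      ext; rw [SimpleGraph.mem_neighborFinset]; simp [subStar, eq_comm]]
  simp

theorem subStar_degree_inr_inl (i : Fin d) : (subStar d).degree (Sum.inr (Sum.inl i)) = 2 := by
  rw [← SimpleGraph.card_neighborFinset_eq_degree,
    show (subStar d).neighborFinset (Sum.inr (Sum.inl i)) = {Sum.inl (), Sum.inr (Sum.inr i)} by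
      ext; rw [SimpleGraph.mem_neighborFinset]; simp [subStar, eq_comm]]
  simp

theorem subStar_degree_inr_inr (i : Fin d) : (subStar d).degree (Sum.inr (Sum.inr i)) = 1 := by
  rw [← SimpleGraph.card_neighborFinset_eq_degree,
    show (subStar d).neighborFinset (Sum.inr (Sum.inr i)) = {Sum.inr (Sum.inl i)} by
      ext; rw [SimpleGraph.mem_neighborFinset]; simp [subStar, eq_comm]]
  simp

theorem sum_sum_ite_subStar_adj (h : Unit ⊕ Fin d ⊕ Fin d → Unit ⊕ Fin d ⊕ Fin d → ℝ) :
    ∑ u, ∑ v, (if (subStar d).Adj u v then h u v else 0) =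
      ∑ i, (h (Sum.inl ()) (Sum.inr (Sum.inl i)) + h (Sum.inr (Sum.inl i)) (Sum.inl ()) +
        h (Sum.inr (Sum.inl i)) (Sum.inr (Sum.inr i)) +
        h (Sum.inr (Sum.inr i)) (Sum.inr (Sum.inl i))) := by
  simp [Fintype.sum_sum_type, subStar, sum_add_distrib, eq_comm, add_assoc, add_comm, add_left_comm]

theorem sum_subStar_degree_mul (φ : Unit ⊕ Fin d ⊕ Fin d → ℝ) :
    ∑ v, ((subStar d).degree v : ℝ) * φ v =
      ∑ i, (φ (Sum.inl ()) + 2 * φ (Sum.inr (Sum.inl i)) + φ (Sum.inr (Sum.inr i))) := by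
  simp [Fintype.sum_sum_type, subStar_degree_inl, subStar_degree_inr_inl, subStar_degree_inr_inr,
    sum_add_distrib, add_assoc]

theorem subStar_degree_ne_zero (hd : d ≠ 0) (v : Unit ⊕ Fin d ⊕ Fin d) :
    (subStar d).degree v ≠ 0 := by
  rcases v with ⟨⟨⟩⟩ | i | i <;>
    simp [hd, subStar_degree_inl, subStar_degree_inr_inl, subStar_degree_inr_inr]

theorem subStar_degree_weighted_bound (g : Unit ⊕ Fin d ⊕ Fin d → ℝ)
    (hg : ∑ v, ((subStar d).degree v : ℝ) * g v = 0) :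
    (1 - √2 / 2) * ∑ v, ((subStar d).degree v : ℝ) * g v ^ 2 ≤
      (∑ u, ∑ v, if (subStar d).Adj u v then (g u - g v) ^ 2 else 0) / 2 := by
  rw [sum_subStar_degree_mul] at hg ⊢
  rw [sum_sum_ite_subStar_adj, mul_sum]
  calc ∑ i, (1 - √2 / 2) * (g (Sum.inl ()) ^ 2 + 2 * g (Sum.inr (Sum.inl i)) ^ 2 +
        g (Sum.inr (Sum.inr i)) ^ 2)
      ≤ ∑ i, ((g (Sum.inl ()) - g (Sum.inr (Sum.inl i))) ^ 2 +
          (g (Sum.inr (Sum.inl i)) - g (Sum.inr (Sum.inr i))) ^ 2 +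
          (2 - √2) * g (Sum.inl ()) * (g (Sum.inl ()) + 2 * g (Sum.inr (Sum.inl i)) +
            g (Sum.inr (Sum.inr i)))) :=
        sum_le_sum fun i _ => one_sub_sqrt_two_div_two_mul_le _ _ _
    _ = ∑ i, ((g (Sum.inl ()) - g (Sum.inr (Sum.inl i))) ^ 2 +
          (g (Sum.inr (Sum.inl i)) - g (Sum.inr (Sum.inr i))) ^ 2) := by
        rw [sum_add_distrib, ← mul_sum, hg, mul_zero, add_zero]
    _ = _ := by
        rw [sum_div]
        exact sum_congr rfl fun i _ => by ring

end SubStar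

/-- the Fiedler value (first nonzero eigenvalue) of the
normalized Laplacian of the once-subdivided star graph `S_d^1` is bounded
below by a positive constant independent of `d`. -/
theorem stmt16 : ∃ c₀ : ℝ, 0 < c₀ ∧ ∀ d : ℕ, 1 ≤ d →
    c₀ ≤ kthEig (normLap (subStar d)) 1 := by
  have hs : √2 < 2 := by
    nlinarith [Real.sq_sqrt (zero_le_two (α := ℝ)), Real.sqrt_nonneg 2]
  refine ⟨1 - √2 / 2, by linarith, fun d hd => ?_⟩
  have hcard : 2 ≤ Fintype.card (Unit ⊕ Fin d ⊕ Fin d) := by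
    simp only [Fintype.card_sum, Fintype.card_unique, Fintype.card_fin]; omega
  exact le_kthEig_one _ hcard _
    (le_dotProduct_normLap_mulVec_of_forall _ (subStar_degree_ne_zero (by omega))
      subStar_degree_weighted_bound)
end
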